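/- arXiv:1810.00353 — 7 statements merged into one kernel-verified Lean document; each statement's English description precedes it below -/
import Mathlib

section
/- Assume the SISDP setting, Slater's constraint qualification with Slater point x̃ (F(x̃) ∈ S^m_{++} and g(x̃,τ) < 0 for all τ ∈ T), and that τ ↦ g(x,τ) and τ ↦ ∇ₓg(x,τ) are continuous for each fixed x. Let x* ∈ ℝⁿ, let W ∈ S^m_+, and let p be a finite nonnegative Borel measure on T such that F(x*) ∈ S^m_+, F(x*)∘W = O, ∫_T g(x*,τ) dp(τ) = 0, and (F₁•W, …, F_n•W)ᵀ − ∫_T ∇ₓg(x*,τ) dp(τ) = 0. Then W = O and p = 0 (i.e., p(T) = 0). -/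
/-!
Complementarity gives `tr(F(x*) W) = 0`, and stationarity turns `tr((F(x̃) - F(x*)) W)` into
`∫ ⟪∇ₓg(x*,τ), x̃ - x*⟫ dp`, which by convexity of each `g(·,τ)` is at most
`∫ g(x̃,τ) dp - ∫ g(x*,τ) dp = ∫ g(x̃,τ) dp`. So `tr(F(x̃) W) ≤ ∫ g(x̃,τ) dp`.
At the Slater point the left side is `≥ 0`, with equality only if `W = 0` because `F(x̃)` is
positive definite, and the right side is `≤ 0`, with equality only if `p = 0` because
`g(x̃,·) < 0`.
-/

open MeasureTheory Filter Topology

noncomputable def jordan {ι : Type*} [Fintype ι] (X Y : Matrix ι ι ℝ) : Matrix ι ι ℝ :=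
  (2:ℝ)⁻¹ • (X * Y + Y * X)

open Matrix

theorem trace_jordan {ι : Type*} [Fintype ι] (X Y : Matrix ι ι ℝ) :
    (jordan X Y).trace = (X * Y).trace := by
  rw [jordan, trace_smul, trace_add, trace_mul_comm Y X, smul_eq_mul]
  ring

theorem Matrix.trace_pencil_sub_mul {ι n R : Type*} [Fintype ι] [Fintype n] [CommRing R]
    (F₀ : Matrix n n R) (F : ι → Matrix n n R) (x y : ι → R) (W : Matrix n n R) :
    ((F₀ + ∑ i, y i • F i - (F₀ + ∑ i, x i • F i)) * W).trace
      = ∑ i, (y i - x i) * (F i * W).trace := by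
  simp only [add_sub_add_left_eq_sub, ← Finset.sum_sub_distrib, ← sub_smul, Finset.sum_mul,
    trace_sum, smul_mul_assoc, trace_smul, smul_eq_mul]

section PosSemidef

open scoped ComplexOrder

variable {n 𝕜 : Type*} [Fintype n] [RCLike 𝕜]

theorem Matrix.trace_mul_sum_vecMulVec {m : ℕ} (A : Matrix n n 𝕜) (v : Fin m → n → 𝕜) :
    (A * ∑ k, vecMulVec (v k) (star (v k))).trace = ∑ k, star (v k) ⬝ᵥ (A *ᵥ v k) := by
  simp only [Finset.mul_sum, trace_sum, mul_vecMulVec, trace_vecMulVec, dotProduct_comm]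

theorem Matrix.PosSemidef.trace_mul_nonneg {A W : Matrix n n 𝕜} (hA : A.PosSemidef)
    (hW : W.PosSemidef) : 0 ≤ (A * W).trace := by
  obtain ⟨m, v, rfl⟩ := posSemidef_iff_eq_sum_vecMulVec.mp hW
  rw [trace_mul_sum_vecMulVec]
  exact Finset.sum_nonneg fun k _ => hA.dotProduct_mulVec_nonneg (v k)

theorem Matrix.PosDef.trace_mul_eq_zero_iff {A W : Matrix n n 𝕜} (hA : A.PosDef)
    (hW : W.PosSemidef) : (A * W).trace = 0 ↔ W = 0 := by
  refine ⟨fun h => ?_, fun h => by rw [h, mul_zero, trace_zero]⟩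
  obtain ⟨m, v, rfl⟩ := posSemidef_iff_eq_sum_vecMulVec.mp hW
  rw [trace_mul_sum_vecMulVec, Finset.sum_eq_zero_iff_of_nonneg
    fun k _ => hA.posSemidef.dotProduct_mulVec_nonneg (v k)] at h
  have hv : ∀ k, v k = 0 := fun k => by
    by_contra hk
    exact (hA.dotProduct_mulVec_pos hk).ne' (h k (Finset.mem_univ k))
  simp [hv]

end PosSemidef

theorem ConvexOn.add_fderiv_le {E : Type*} [NormedAddCommGroup E] [NormedSpace ℝ E]
    {s : Set E} {f : E → ℝ} {f' : E →L[ℝ] ℝ} {x y : E} (hf : ConvexOn ℝ s f)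
    (hx : x ∈ s) (hy : y ∈ s) (hf' : HasFDerivAt f f' x) :
    f x + f' (y - x) ≤ f y := by
  let ℓ : ℝ →ᵃ[ℝ] E := AffineMap.lineMap x y
  have hφ : HasDerivAt (f ∘ ℓ) (f' (y - x)) 0 :=
    hf'.comp_hasDerivAt_of_eq 0 AffineMap.hasDerivAt_lineMap (by simp [ℓ])
  have hslope := (hf.comp_affineMap ℓ).le_slope_of_hasDerivAt (x := 0) (y := 1)
    (by simpa [ℓ] using hx) (by simpa [ℓ] using hy) one_pos hφ
  simp only [slope_def_field, sub_zero, div_one, Function.comp_apply, ℓ,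
    AffineMap.lineMap_apply_zero, AffineMap.lineMap_apply_one] at hslope
  linarith

theorem ConvexOn.add_inner_gradient_le {E : Type*} [NormedAddCommGroup E] [InnerProductSpace ℝ E]
    [CompleteSpace E] {s : Set E} {f : E → ℝ} {G x y : E} (hf : ConvexOn ℝ s f)
    (hx : x ∈ s) (hy : y ∈ s) (hG : HasGradientAt f G x) :
    f x + inner ℝ G (y - x) ≤ f y :=
  hf.add_fderiv_le hx hy hG.hasFDerivAt

section Integral

variable {α : Type*} [MeasurableSpace α] {μ : Measure α}

theorem MeasureTheory.integral_inner_gradient_le_integral_sub {E : Type*} [NormedAddCommGroup E]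
    [InnerProductSpace ℝ E] [CompleteSpace E] {g : E → α → ℝ} {G : α → E} {x y : E}
    (hconv : ∀ a, ConvexOn ℝ Set.univ fun z => g z a)
    (hG : ∀ a, HasGradientAt (g · a) (G a) x)
    (hGi : Integrable G μ) (hx : Integrable (g x) μ) (hy : Integrable (g y) μ) :
    ∫ a, inner ℝ (G a) (y - x) ∂μ ≤ ∫ a, g y a ∂μ - ∫ a, g x a ∂μ := by
  rw [← integral_sub hy hx]
  refine integral_mono (hGi.inner_const (y - x)) (hy.sub hx) fun a => ?_
  have := (hconv a).add_inner_gradient_le (Set.mem_univ x) (Set.mem_univ y) (hG a)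
  linarith

theorem MeasureTheory.integral_inner_eq_sum_mul_integral {n : ℕ}
    {G : α → EuclideanSpace ℝ (Fin n)} (hG : Integrable G μ)
    (d : EuclideanSpace ℝ (Fin n)) :
    ∫ a, inner ℝ (G a) d ∂μ = ∑ j, d j * ∫ a, G a j ∂μ := by
  have hGj (j : Fin n) : Integrable (fun a => G a j) μ :=
    (EuclideanSpace.proj (𝕜 := ℝ) j).integrable_comp hG
  simp only [PiLp.inner_apply, RCLike.inner_apply, conj_trivial]
  rw [integral_finsetSum _ fun j _ => (hGj j).const_mul (d j)]
  simp_rw [integral_const_mul]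

theorem MeasureTheory.measure_eq_zero_of_integral_eq_zero_of_neg {f : α → ℝ}
    (hf : ∀ a, f a < 0) (hfi : Integrable f μ) (h : ∫ a, f a ∂μ = 0) : μ = 0 := by
  have hpos := integral_pos_iff_support_of_nonneg (fun a => (neg_pos.2 (hf a)).le) hfi.neg
  have hsupp : (Function.support fun a => -f a) = Set.univ :=
    Set.eq_univ_of_forall fun a => neg_ne_zero.2 (hf a).ne
  rw [hsupp, integral_neg, h, neg_zero, lt_self_iff_false, false_iff, not_lt, nonpos_iff_eq_zero,
    Measure.measure_univ_eq_zero] at hpos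
  exact hpos

end Integral

theorem sisdp_multiplier_vanish_general {n m : ℕ} {T : Type*} [MetricSpace T] [CompactSpace T]
    [MeasurableSpace T] [BorelSpace T]
    (g : EuclideanSpace ℝ (Fin n) → T → ℝ)
    (hgconv : ∀ τ : T, ConvexOn ℝ Set.univ fun x => g x τ)
    (ggrad : EuclideanSpace ℝ (Fin n) → T → EuclideanSpace ℝ (Fin n))
    (hgg : ∀ x τ, HasGradientAt (fun z => g z τ) (ggrad x τ) x)
    (F0 : Matrix (Fin m) (Fin m) ℝ) (Fmat : Fin n → Matrix (Fin m) (Fin m) ℝ)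
    (Fx : EuclideanSpace ℝ (Fin n) → Matrix (Fin m) (Fin m) ℝ)
    (hFx : ∀ x, Fx x = F0 + ∑ i, x i • Fmat i)
    -- Slater point x̃
    (xtilde : EuclideanSpace ℝ (Fin n))
    (hSlater1 : (Fx xtilde).PosDef) (hSlater2 : ∀ τ, g xtilde τ < 0)
    (xstar : EuclideanSpace ℝ (Fin n))
    -- continuity of τ ↦ g(x,τ) and τ ↦ ∇ₓg(x,τ) for each fixed x
    (hgcont : ∀ x : EuclideanSpace ℝ (Fin n), Continuous fun τ => g x τ)
    (hggcont : ∀ x : EuclideanSpace ℝ (Fin n), Continuous fun τ => ggrad x τ)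
    (W : Matrix (Fin m) (Fin m) ℝ) (hW : W.PosSemidef)
    (p : Measure T) [IsFiniteMeasure p]
    (hcompl : jordan (Fx xstar) W = 0)
    (hint : (∫ τ, g xstar τ ∂p) = 0)
    (hstat : ∀ j, (Fmat j * W).trace - (∫ τ, ggrad xstar τ j ∂p) = 0) :
    W = 0 ∧ p = 0 := by
  have hg_int (x : EuclideanSpace ℝ (Fin n)) : Integrable (g x) p :=
    (hgcont x).integrable_of_hasCompactSupport (.of_compactSpace _)
  have hgrad_int : Integrable (ggrad xstar) p :=
    (hggcont xstar).integrable_of_hasCompactSupport (.of_compactSpace _)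
  have hdual : (Fx xtilde * W).trace ≤ ∫ τ, g xtilde τ ∂p := calc
    (Fx xtilde * W).trace = ((Fx xtilde - Fx xstar) * W).trace := by
      rw [Matrix.sub_mul, trace_sub, ← trace_jordan (Fx xstar) W, hcompl, trace_zero, sub_zero]
    _ = ∑ j, (xtilde - xstar) j * ∫ τ, ggrad xstar τ j ∂p := by
      simp_rw [hFx, trace_pencil_sub_mul, PiLp.sub_apply, sub_eq_zero.1 (hstat _)]
    _ = ∫ τ, inner ℝ (ggrad xstar τ) (xtilde - xstar) ∂p :=
      (integral_inner_eq_sum_mul_integral hgrad_int _).symm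
    _ ≤ ∫ τ, g xtilde τ ∂p - ∫ τ, g xstar τ ∂p :=
      integral_inner_gradient_le_integral_sub hgconv (hgg xstar) hgrad_int (hg_int xstar)
        (hg_int xtilde)
    _ = ∫ τ, g xtilde τ ∂p := by rw [hint, sub_zero]
  have htr_nonneg : 0 ≤ (Fx xtilde * W).trace := hSlater1.posSemidef.trace_mul_nonneg hW
  have hg_nonpos : ∫ τ, g xtilde τ ∂p ≤ 0 := integral_nonpos fun τ => (hSlater2 τ).le
  exact ⟨(hSlater1.trace_mul_eq_zero_iff hW).1 (by linarith),
    measure_eq_zero_of_integral_eq_zero_of_neg hSlater2 (hg_int xtilde) (by linarith)⟩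

/-- under Slater's CQ, the only multiplier pair (W, p) satisfying the
homogeneous KKT-type system at a feasible-in-SDP point x* is (O, 0). -/
theorem sisdp_multiplier_vanish {n m : ℕ} {T : Type*} [MetricSpace T] [CompactSpace T]
    [MeasurableSpace T] [BorelSpace T]
    (g : EuclideanSpace ℝ (Fin n) → T → ℝ)
    (hgc : Continuous fun p : EuclideanSpace ℝ (Fin n) × T => g p.1 p.2)
    (hgconv : ∀ τ : T, ConvexOn ℝ Set.univ fun x => g x τ)
    (ggrad : EuclideanSpace ℝ (Fin n) → T → EuclideanSpace ℝ (Fin n))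
    (hgg : ∀ x τ, HasGradientAt (fun z => g z τ) (ggrad x τ) x)
    (F0 : Matrix (Fin m) (Fin m) ℝ) (Fmat : Fin n → Matrix (Fin m) (Fin m) ℝ)
    (hF0 : F0.IsSymm) (hFi : ∀ i, (Fmat i).IsSymm)
    (Fx : EuclideanSpace ℝ (Fin n) → Matrix (Fin m) (Fin m) ℝ)
    (hFx : ∀ x, Fx x = F0 + ∑ i, x i • Fmat i)
    -- Slater point x̃
    (xtilde : EuclideanSpace ℝ (Fin n))
    (hSlater1 : (Fx xtilde).PosDef) (hSlater2 : ∀ τ, g xtilde τ < 0)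
    (xstar : EuclideanSpace ℝ (Fin n))
    -- continuity of τ ↦ g(x,τ) and τ ↦ ∇ₓg(x,τ) for each fixed x
    (hgcont : ∀ x : EuclideanSpace ℝ (Fin n), Continuous fun τ => g x τ)
    (hggcont : ∀ x : EuclideanSpace ℝ (Fin n), Continuous fun τ => ggrad x τ)
    (W : Matrix (Fin m) (Fin m) ℝ) (hW : W.PosSemidef)
    (p : Measure T) [IsFiniteMeasure p]
    (hFpsd : (Fx xstar).PosSemidef)
    (hcompl : jordan (Fx xstar) W = 0)
    (hint : (∫ τ, g xstar τ ∂p) = 0)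
    (hstat : ∀ j, (Fmat j * W).trace - (∫ τ, ggrad xstar τ j ∂p) = 0) :
    W = 0 ∧ p = 0 :=
  sisdp_multiplier_vanish_general g hgconv ggrad hgg F0 Fmat Fx hFx xtilde hSlater1 hSlater2 xstar
    hgcont hggcont W hW p hcompl hint hstat
end

section
/- Assume the SISDP setting with (x,τ) ↦ g(x,τ) and (x,τ) ↦ ∇ₓg(x,τ) jointly continuous. Let {x^k} ⊂ ℝⁿ, {V_k} ⊂ S^m, {y^k} finite nonnegative Borel measures on T, and {μ_k}, {ε_k} positive sequences with μ_k → 0 and ε_k → 0, such that for every k: F(x^k) ∈ S^m_{++}, V_k ∈ S^m_{++}, max_{τ∈T} max(g(x^k,τ),0) ≤ ε_k, ‖∇f(x^k) + ∫_T ∇ₓg(x^k,τ) dy^k(τ) − (F₁•V_k,…,F_n•V_k)ᵀ‖ ≤ ε_k, |∫_T g(x^k,τ) dy^k(τ)| ≤ ε_k, and ‖F(x^k)∘V_k − μ_k I‖_F ≤ ε_k. Suppose x^k → x*, V_k → V*, and y^k converges to a finite nonnegative Borel measure y* in the weak* sense that ∫_T h dy^k → ∫_T h dy* for every continuous h: T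 → ℝ. Then (x*, y*, V*) is a KKT point of the SISDP: ∇f(x*) + ∫_T ∇ₓg(x*,τ) dy*(τ) − (F₁•V*,…,F_n•V*)ᵀ = 0; F(x*)∘V* = O, F(x*) ∈ S^m_+, V* ∈ S^m_+; ∫_T g(x*,τ) dy*(τ) = 0 and g(x*,τ) ≤ 0 for all τ ∈ T. -/
/-
Each KKT condition is the limit of its `ε_k`-approximate version, and the sets it describes are
closed. The only non-routine limits are the integrals `∫ φ (x k) τ ∂(y k)` of a jointly continuous
`φ`: as `T` is compact, `φ (x k) ·` converges to `φ xstar ·` uniformly, and the masses of `y k`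
converge (test against the constant `1`), so weak* convergence of `y k` passes to these integrals.
-/

open MeasureTheory Filter Topology

noncomputable def frobNorm {ι : Type*} [Fintype ι] (A : Matrix ι ι ℝ) : ℝ :=
  Real.sqrt (∑ i, ∑ j, (A i j) ^ 2)

lemma abs_le_sqrt_sum_sq {ι : Type*} [Fintype ι] (v : ι → ℝ) (i : ι) :
    |v i| ≤ √(∑ j, v j ^ 2) :=
  Real.abs_le_sqrt (Finset.single_le_sum (f := fun j => v j ^ 2) (fun _ _ => sq_nonneg _)
    (Finset.mem_univ i))

lemma abs_apply_le_frobNorm {ι : Type*} [Fintype ι] (A : Matrix ι ι ℝ) (i j : ι) :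
    |A i j| ≤ frobNorm A :=
  (abs_le_sqrt_sum_sq (A i) j).trans <| Real.sqrt_le_sqrt <|
    Finset.single_le_sum (f := fun l => ∑ r, A l r ^ 2)
      (fun _ _ => Finset.sum_nonneg fun _ _ => sq_nonneg _) (Finset.mem_univ i)

lemma eq_zero_of_tendsto_of_abs_le {ι : Type*} {l : Filter ι} [l.NeBot] {a ε : ι → ℝ} {L : ℝ}
    (ha : Tendsto a l (𝓝 L)) (hε : Tendsto ε l (𝓝 0)) (h : ∀ i, |a i| ≤ ε i) : L = 0 :=
  tendsto_nhds_unique ha (squeeze_zero_norm h hε)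

lemma Filter.Tendsto.jordan {ι α : Type*} [Fintype ι] {l : Filter α}
    {A B : α → Matrix ι ι ℝ} {A₀ B₀ : Matrix ι ι ℝ}
    (hA : Tendsto A l (𝓝 A₀)) (hB : Tendsto B l (𝓝 B₀)) :
    Tendsto (fun a => jordan (A a) (B a)) l (𝓝 (jordan A₀ B₀)) :=
  ((hA.mul hB).add (hB.mul hA)).const_smul _

lemma Matrix.isClosed_setOf_posSemidef {ι : Type*} [Fintype ι] :
    IsClosed {A : Matrix ι ι ℝ | A.PosSemidef} := by
  simp only [Matrix.posSemidef_iff_dotProduct_mulVec, Set.ofPred_and, Set.ofPred_forall]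
  exact (isClosed_eq continuous_id.matrix_conjTranspose continuous_id).inter <|
    isClosed_iInter fun z => isClosed_le continuous_const <|
      continuous_const.dotProduct (continuous_id.matrix_mulVec continuous_const)

section WeakStar

variable {T : Type*} [TopologicalSpace T] [CompactSpace T] [MeasurableSpace T]
  [OpensMeasurableSpace T]

lemma ContinuousMap.integrable (ν : Measure T) [IsFiniteMeasure ν] (h : C(T, ℝ)) :
    Integrable h ν :=
  (BoundedContinuousFunction.mkOfCompact h).integrable ν

lemma ContinuousMap.norm_integral_le_mul_norm (ν : Measure T) [IsFiniteMeasure ν]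
    (h : C(T, ℝ)) : ‖∫ τ, h τ ∂ν‖ ≤ ν.real Set.univ * ‖h‖ :=
  (BoundedContinuousFunction.mkOfCompact h).norm_integral_le_mul_norm ν

variable {ι : Type*} {l : Filter ι} {y : ι → Measure T} [∀ i, IsFiniteMeasure (y i)]
  {ystar : Measure T}

lemma tendsto_integral_of_tendsto_of_weakStar
    (hy : ∀ h : T → ℝ, Continuous h →
      Tendsto (fun i => ∫ τ, h τ ∂(y i)) l (𝓝 (∫ τ, h τ ∂ystar)))
    {H : ι → C(T, ℝ)} {H₀ : C(T, ℝ)} (hH : Tendsto H l (𝓝 H₀)) :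
    Tendsto (fun i => ∫ τ, H i τ ∂(y i)) l (𝓝 (∫ τ, H₀ τ ∂ystar)) := by
  have hmass : Tendsto (fun i => (y i).real Set.univ) l (𝓝 (ystar.real Set.univ)) := by
    simpa using hy (fun _ => 1) continuous_const
  have hdiff : Tendsto (fun i => ∫ τ, H i τ ∂(y i) - ∫ τ, H₀ τ ∂(y i)) l (𝓝 0) := by
    have hbound : Tendsto (fun i => (y i).real Set.univ * ‖H i - H₀‖) l (𝓝 0) := by
      simpa using hmass.mul (tendsto_iff_norm_sub_tendsto_zero.mp hH)
    refine squeeze_zero_norm (fun i => ?_) hbound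
    rw [← integral_sub ((H i).integrable _) (H₀.integrable _)]
    exact (H i - H₀).norm_integral_le_mul_norm (y i)
  simpa using hdiff.add (hy H₀ H₀.continuous)

lemma tendsto_integral_of_continuous_uncurry_of_weakStar {X : Type*} [TopologicalSpace X]
    (hy : ∀ h : T → ℝ, Continuous h →
      Tendsto (fun i => ∫ τ, h τ ∂(y i)) l (𝓝 (∫ τ, h τ ∂ystar)))
    {φ : X → T → ℝ} (hφ : Continuous fun q : X × T => φ q.1 q.2) {x : ι → X} {x₀ : X}
    (hx : Tendsto x l (𝓝 x₀)) :
    Tendsto (fun i => ∫ τ, φ (x i) τ ∂(y i)) l (𝓝 (∫ τ, φ x₀ τ ∂ystar)) :=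
  tendsto_integral_of_tendsto_of_weakStar hy
    (((ContinuousMap.curry ⟨_, hφ⟩).continuous.tendsto x₀).comp hx)

end WeakStar

theorem sisdp_bkkt_limit_is_kkt_general {n m : ℕ} {T : Type*} [MetricSpace T] [CompactSpace T]
    [MeasurableSpace T] [BorelSpace T]
    (fgrad : EuclideanSpace ℝ (Fin n) → EuclideanSpace ℝ (Fin n))
    (hfgradc : Continuous fgrad)
    (g : EuclideanSpace ℝ (Fin n) → T → ℝ)
    (hgc : Continuous fun q : EuclideanSpace ℝ (Fin n) × T => g q.1 q.2)
    (ggrad : EuclideanSpace ℝ (Fin n) → T → EuclideanSpace ℝ (Fin n))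
    (hggc : Continuous fun q : EuclideanSpace ℝ (Fin n) × T => ggrad q.1 q.2)
    (F0 : Matrix (Fin m) (Fin m) ℝ) (Fmat : Fin n → Matrix (Fin m) (Fin m) ℝ)
    (Fx : EuclideanSpace ℝ (Fin n) → Matrix (Fin m) (Fin m) ℝ)
    (hFx : ∀ x, Fx x = F0 + ∑ i, x i • Fmat i)
    -- the sequences
    (x : ℕ → EuclideanSpace ℝ (Fin n)) (V : ℕ → Matrix (Fin m) (Fin m) ℝ)
    (y : ℕ → Measure T) (hyfin : ∀ k, IsFiniteMeasure (y k))
    (μ ε : ℕ → ℝ)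
    (hμ0 : Tendsto μ atTop (𝓝 0)) (hε0 : Tendsto ε atTop (𝓝 0))
    -- approximate BKKT conditions at each k
    (hFpd : ∀ k, (Fx (x k)).PosDef) (hVpd : ∀ k, (V k).PosDef)
    (hθ : ∀ k, ∀ τ : T, max (g (x k) τ) 0 ≤ ε k)
    (hstat : ∀ k,
      Real.sqrt (∑ j, (fgrad (x k) j + (∫ τ, ggrad (x k) τ j ∂(y k)) - (Fmat j * V k).trace) ^ 2)
        ≤ ε k)
    (hcs : ∀ k, |∫ τ, g (x k) τ ∂(y k)| ≤ ε k)
    (hjord : ∀ k, frobNorm (jordan (Fx (x k)) (V k) - μ k • (1 : Matrix (Fin m) (Fin m) ℝ)) ≤ ε k)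
    -- the limits
    (xstar : EuclideanSpace ℝ (Fin n)) (Vstar : Matrix (Fin m) (Fin m) ℝ)
    (ystar : Measure T)
    (hx : Tendsto x atTop (𝓝 xstar)) (hV : Tendsto V atTop (𝓝 Vstar))
    (hy : ∀ h : T → ℝ, Continuous h →
      Tendsto (fun k => ∫ τ, h τ ∂(y k)) atTop (𝓝 (∫ τ, h τ ∂ystar))) :
    (∀ j, fgrad xstar j + (∫ τ, ggrad xstar τ j ∂ystar) - (Fmat j * Vstar).trace = 0) ∧
    jordan (Fx xstar) Vstar = 0 ∧ (Fx xstar).PosSemidef ∧ Vstar.PosSemidef ∧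
    (∫ τ, g xstar τ ∂ystar) = 0 ∧ (∀ τ : T, g xstar τ ≤ 0) := by
  have := hyfin
  have hcoord : ∀ j, Continuous fun z : EuclideanSpace ℝ (Fin n) => z j :=
    fun j => PiLp.continuous_apply 2 _ j
  have hFlim : Tendsto (fun k => Fx (x k)) atTop (𝓝 (Fx xstar)) := by
    have hFc : Continuous Fx := funext hFx ▸ continuous_const.add
      (continuous_finsetSum _ fun i _ => (hcoord i).smul continuous_const)
    exact (hFc.tendsto xstar).comp hx
  refine ⟨fun j => ?_, ?_,
    Matrix.isClosed_setOf_posSemidef.mem_of_tendsto hFlim (.of_forall fun k => (hFpd k).posSemidef),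
    Matrix.isClosed_setOf_posSemidef.mem_of_tendsto hV (.of_forall fun k => (hVpd k).posSemidef),
    ?_, fun τ => ?_⟩
  · refine eq_zero_of_tendsto_of_abs_le ?_ hε0 fun k => (abs_le_sqrt_sum_sq _ j).trans (hstat k)
    exact ((((hcoord j).comp hfgradc).tendsto _).comp hx).add
      (tendsto_integral_of_continuous_uncurry_of_weakStar hy (φ := fun z τ => ggrad z τ j)
        ((hcoord j).comp hggc) hx) |>.sub
      (((continuous_const.matrix_mul continuous_id).matrix_trace.tendsto _).comp hV)
  · have hres : Tendsto (fun k => jordan (Fx (x k)) (V k) - μ k • 1) atTop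
        (𝓝 (jordan (Fx xstar) Vstar)) := by
      simpa using (hFlim.jordan hV).sub (hμ0.smul_const (1 : Matrix (Fin m) (Fin m) ℝ))
    ext i j
    exact eq_zero_of_tendsto_of_abs_le
      ((((continuous_apply j).comp (continuous_apply i)).tendsto _).comp hres) hε0
      fun k => (abs_apply_le_frobNorm _ i j).trans (hjord k)
  · exact eq_zero_of_tendsto_of_abs_le
      (tendsto_integral_of_continuous_uncurry_of_weakStar hy hgc hx) hε0 hcs
  · exact le_of_tendsto_of_tendsto' ((hgc.tendsto (xstar, τ)).comp
      (hx.prodMk_nhds tendsto_const_nhds)) hε0 fun k => (le_max_left _ _).trans (hθ k τ)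

/-- any (weak*-)limit of a sequence of approximate BKKT points (with
μ_k → 0 and ε_k → 0) is a KKT point of the SISDP. -/
theorem sisdp_bkkt_limit_is_kkt {n m : ℕ} {T : Type*} [MetricSpace T] [CompactSpace T]
    [MeasurableSpace T] [BorelSpace T]
    (f : EuclideanSpace ℝ (Fin n) → ℝ)
    (fgrad : EuclideanSpace ℝ (Fin n) → EuclideanSpace ℝ (Fin n))
    (hf : ∀ x, HasGradientAt f (fgrad x) x) (hfgradc : Continuous fgrad)
    (g : EuclideanSpace ℝ (Fin n) → T → ℝ)
    (hgc : Continuous fun q : EuclideanSpace ℝ (Fin n) × T => g q.1 q.2)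
    (hgconv : ∀ τ : T, ConvexOn ℝ Set.univ fun x => g x τ)
    (ggrad : EuclideanSpace ℝ (Fin n) → T → EuclideanSpace ℝ (Fin n))
    (hgg : ∀ x τ, HasGradientAt (fun z => g z τ) (ggrad x τ) x)
    (hggc : Continuous fun q : EuclideanSpace ℝ (Fin n) × T => ggrad q.1 q.2)
    (F0 : Matrix (Fin m) (Fin m) ℝ) (Fmat : Fin n → Matrix (Fin m) (Fin m) ℝ)
    (hF0 : F0.IsSymm) (hFi : ∀ i, (Fmat i).IsSymm)
    (Fx : EuclideanSpace ℝ (Fin n) → Matrix (Fin m) (Fin m) ℝ)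
    (hFx : ∀ x, Fx x = F0 + ∑ i, x i • Fmat i)
    -- the sequences
    (x : ℕ → EuclideanSpace ℝ (Fin n)) (V : ℕ → Matrix (Fin m) (Fin m) ℝ)
    (y : ℕ → Measure T) (hyfin : ∀ k, IsFiniteMeasure (y k))
    (μ ε : ℕ → ℝ) (hμpos : ∀ k, 0 < μ k) (hεpos : ∀ k, 0 < ε k)
    (hμ0 : Tendsto μ atTop (𝓝 0)) (hε0 : Tendsto ε atTop (𝓝 0))
    -- approximate BKKT conditions at each k
    (hFpd : ∀ k, (Fx (x k)).PosDef) (hVpd : ∀ k, (V k).PosDef)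
    (hθ : ∀ k, ∀ τ : T, max (g (x k) τ) 0 ≤ ε k)
    (hstat : ∀ k,
      Real.sqrt (∑ j, (fgrad (x k) j + (∫ τ, ggrad (x k) τ j ∂(y k)) - (Fmat j * V k).trace) ^ 2)
        ≤ ε k)
    (hcs : ∀ k, |∫ τ, g (x k) τ ∂(y k)| ≤ ε k)
    (hjord : ∀ k, frobNorm (jordan (Fx (x k)) (V k) - μ k • (1 : Matrix (Fin m) (Fin m) ℝ)) ≤ ε k)
    -- the limits
    (xstar : EuclideanSpace ℝ (Fin n)) (Vstar : Matrix (Fin m) (Fin m) ℝ)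
    (ystar : Measure T) [IsFiniteMeasure ystar]
    (hx : Tendsto x atTop (𝓝 xstar)) (hV : Tendsto V atTop (𝓝 Vstar))
    (hy : ∀ h : T → ℝ, Continuous h →
      Tendsto (fun k => ∫ τ, h τ ∂(y k)) atTop (𝓝 (∫ τ, h τ ∂ystar))) :
    (∀ j, fgrad xstar j + (∫ τ, ggrad xstar τ j ∂ystar) - (Fmat j * Vstar).trace = 0) ∧
    jordan (Fx xstar) Vstar = 0 ∧ (Fx xstar).PosSemidef ∧ Vstar.PosSemidef ∧
    (∫ τ, g xstar τ ∂ystar) = 0 ∧ (∀ τ : T, g xstar τ ≤ 0) :=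
  sisdp_bkkt_limit_is_kkt_general fgrad hfgradc g hgc ggrad hggc F0 Fmat Fx hFx x V y hyfin μ ε hμ0
    hε0 hFpd hVpd hθ hstat hcs hjord xstar Vstar ystar hx hV hy
end

section
/- Let X, Y ∈ S^m_{++} be such that the Jordan product X∘Y is also positive definite. Then for every nonzero symmetric matrix D, Tr(D·(X∘(Y∘D))) + Tr(D·(Y∘(X∘D))) > 0; that is, the operator L_X L_Y + L_Y L_X is positive definite on S^m, where L_X(Z) := X∘Z. -/
/-!
Expanding the Jordan products and using cyclicity of the trace,
`Tr(D (X∘(Y∘D))) + Tr(D (Y∘(X∘D))) = Tr(D (X∘Y) D) + Tr((D X D) Y)`.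
For symmetric `D ≠ 0` the first term is positive because `X∘Y` is positive definite, and the
second is the trace of a product of two positive semidefinite matrices, hence nonnegative.
-/

open Matrix
open scoped ComplexOrder MatrixOrder

namespace Matrix

variable {n m 𝕜 : Type*} [Fintype n] [Fintype m] [RCLike 𝕜]

lemma PosSemidef.trace_mul_nonneg_s6 {A B : Matrix n n 𝕜} (hA : A.PosSemidef) (hB : B.PosSemidef) :
    0 ≤ (A * B).trace := by
  classical
  obtain ⟨C, rfl⟩ := CStarAlgebra.nonneg_iff_eq_star_mul_self.mp hB.nonneg
  rw [star_eq_conjTranspose, ← Matrix.mul_assoc, trace_mul_cycle]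
  exact (hA.mul_mul_conjTranspose_same C).trace_nonneg

lemma PosDef.trace_conjTranspose_mul_mul_pos {A : Matrix n n 𝕜} (hA : A.PosDef)
    {D : Matrix n m 𝕜} (hD : D ≠ 0) : 0 < (Dᴴ * A * D).trace := by
  have hpsd := hA.posSemidef.conjTranspose_mul_mul_same D
  refine lt_of_le_of_ne hpsd.trace_nonneg (Ne.symm ?_)
  rw [Ne, hpsd.trace_eq_zero_iff]
  contrapose! hD
  ext i j
  have hdiag : (Dᴴ * A * D) j j = star (fun k ↦ D k j) ⬝ᵥ A *ᵥ fun k ↦ D k j := by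
    simp only [mul_apply, dotProduct, mulVec, Finset.mul_sum, Finset.sum_mul]
    rw [Finset.sum_comm]
    simp [mul_assoc]
  have hcol : (fun k ↦ D k j) = 0 := by
    by_contra hne
    exact (hA.dotProduct_mulVec_pos hne).ne' (by rw [← hdiag, hD]; rfl)
  exact congrFun hcol i

end Matrix

lemma trace_mul_jordan_jordan_add {ι : Type*} [Fintype ι] (X Y D : Matrix ι ι ℝ) :
    (D * jordan X (jordan Y D)).trace + (D * jordan Y (jordan X D)).trace =
      (D * jordan X Y * D).trace + (D * X * D * Y).trace := by
  simp only [jordan, Matrix.mul_smul, Matrix.smul_mul, Matrix.mul_add, Matrix.add_mul,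
    Matrix.trace_add, Matrix.trace_smul, smul_eq_mul, ← Matrix.mul_assoc]
  have hDD (M N : Matrix ι ι ℝ) : (D * D * M * N).trace = (D * M * N * D).trace := by
    rw [show D * D * M * N = D * (D * M * N) by simp only [Matrix.mul_assoc], trace_mul_comm]
  have hcross : (D * Y * D * X).trace = (D * X * D * Y).trace := by
    rw [Matrix.mul_assoc (D * Y), trace_mul_comm, ← Matrix.mul_assoc]
  rw [hDD, hDD, hcross]
  ring

/-- if X, Y and X∘Y are positive definite, the operator
L_X L_Y + L_Y L_X is positive definite on S^m. -/
theorem jordan_operator_posdef {m : ℕ} (X Y : Matrix (Fin m) (Fin m) ℝ)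
    (hX : X.PosDef) (hY : Y.PosDef) (hXY : (jordan X Y).PosDef) :
    ∀ D : Matrix (Fin m) (Fin m) ℝ, D.IsSymm → D ≠ 0 →
      0 < (D * jordan X (jordan Y D)).trace + (D * jordan Y (jordan X D)).trace := by
  intro D hD hD0
  have hDstar : Dᴴ = D := (conjTranspose_eq_transpose_of_trivial D).trans hD
  have hconj : 0 < (D * jordan X Y * D).trace := by
    simpa only [hDstar] using hXY.trace_conjTranspose_mul_mul_pos hD0
  have hcross : 0 ≤ (D * X * D * Y).trace := by
    refine PosSemidef.trace_mul_nonneg_s6 ?_ hY.posSemidef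
    simpa only [hDstar] using hX.posSemidef.conjTranspose_mul_mul_same D
  rw [trace_mul_jordan_jordan_add]
  linarith
end

section
/- Let A, B ∈ S^m_{++} and let F₁,…,F_n ∈ S^m be linearly independent. Assume either (i) there exist μ > 0 and θ ∈ [0,1) with ‖A∘B − μI‖_F ≤ θμ, or (ii) AB = BA. For each j = 1,…,n let M_j, G_j ∈ S^m be the (unique) symmetric matrices satisfying A∘M_j = F_j and A∘G_j = B∘F_j, and define the n×n matrix H by H_{ij} := (1/2)·Tr(F_i·(G_j + B∘M_j)). Then H is positive definite as a quadratic form: for every nonzero Δx ∈ ℝⁿ, Σ_{i,j} Δxᵢ Δx_j H_{ij} > 0. -/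
/-!
Writing `F = ∑ Δxᵢ Fᵢ`, `M = ∑ Δxᵢ Mᵢ`, `G = ∑ Δxᵢ Gᵢ`, the quadratic form is
`½ tr (F (G + B ∘ M))` with `A ∘ M = F` and `A ∘ G = B ∘ F`. Since every `L_X` is self-adjoint
for the trace inner product, both halves equal `tr (M (B ∘ (A ∘ M)))`, which expands to
`½ tr (M (A ∘ B) M) + ½ tr (M A M B)`. The second term is `≥ 0` because `M A M` and `B` are
positive semidefinite; the first is `> 0` as soon as `A ∘ B` is positive definite and `M ≠ 0`.
`A ∘ B` is positive definite under (ii) because it equals the product `A B` of commuting positive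
definite matrices, and under (i) because `A ∘ B` lies within Frobenius distance `< μ` of `μ I`.
-/

open Matrix

variable {ι : Type*} [Fintype ι]

namespace Matrix

open scoped MatrixOrder ComplexOrder

theorem trace_sum_smul_mul_sum_smul {κ : Type*} [Fintype κ] (c d : κ → ℝ)
    (X Y : κ → Matrix ι ι ℝ) :
    ((∑ i, c i • X i) * ∑ j, d j • Y j).trace = ∑ i, ∑ j, c i * d j * (X i * Y j).trace := by
  rw [Matrix.sum_mul, trace_sum]
  simp only [Matrix.smul_mul, Matrix.mul_smul, trace_smul, trace_sum, smul_eq_mul,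
    Finset.mul_sum, mul_assoc, mul_left_comm (d _)]

theorem PosDef.trace_conjTranspose_mul_mul_pos_s7 [DecidableEq ι] {κ 𝕜 : Type*} [Fintype κ]
    [RCLike 𝕜] {C : Matrix ι ι 𝕜} (hC : C.PosDef) {M : Matrix ι κ 𝕜} (hM : M ≠ 0) :
    0 < (Mᴴ * C * M).trace := by
  obtain ⟨y, hy, rfl⟩ :=
    CStarAlgebra.isStrictlyPositive_iff_eq_star_mul_self.mp hC.isStrictlyPositive
  have h : Mᴴ * (star y * y) * M = (y * M)ᴴ * (y * M) := by
    simp only [star_eq_conjTranspose, conjTranspose_mul, Matrix.mul_assoc]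
  rw [h]
  refine (posSemidef_conjTranspose_mul_self _).trace_nonneg.lt_of_ne' ?_
  rw [Ne, trace_conjTranspose_mul_self_eq_zero_iff]
  intro h0
  apply hM
  simpa [h0] using (nonsing_inv_mul_cancel_left (A := y) M ((isUnit_iff_isUnit_det y).mp hy)).symm

theorem PosSemidef.trace_mul_nonneg_s7 {𝕜 : Type*} [RCLike 𝕜] {P Q : Matrix ι ι 𝕜}
    (hP : P.PosSemidef) (hQ : Q.PosSemidef) : 0 ≤ (P * Q).trace := by
  classical
  obtain ⟨y, rfl⟩ := CStarAlgebra.nonneg_iff_eq_star_mul_self.mp hQ.nonneg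
  rw [← Matrix.mul_assoc, trace_mul_comm, ← Matrix.mul_assoc, star_eq_conjTranspose]
  exact (hP.mul_mul_conjTranspose_same y).trace_nonneg

theorem PosDef.mul_of_commute [DecidableEq ι] {𝕜 : Type*} [RCLike 𝕜] {A B : Matrix ι ι 𝕜}
    (hA : A.PosDef) (hB : B.PosDef) (h : Commute A B) : (A * B).PosDef :=
  ((hA.isStrictlyPositive.commute_iff hB.isStrictlyPositive).mp h).posDef

theorem abs_dotProduct_mulVec_le_frobNorm_mul (E : Matrix ι ι ℝ) (x : ι → ℝ) :
    |x ⬝ᵥ E *ᵥ x| ≤ frobNorm E * (x ⬝ᵥ x) := by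
  have hexp : x ⬝ᵥ E *ᵥ x = ∑ p : ι × ι, E p.1 p.2 * (x p.1 * x p.2) := by
    simp only [dotProduct, mulVec, Finset.mul_sum, Fintype.sum_prod_type]
    exact Finset.sum_congr rfl fun i _ => Finset.sum_congr rfl fun j _ => by ring
  have hsq : ∑ p : ι × ι, (x p.1 * x p.2) ^ 2 = (x ⬝ᵥ x) ^ 2 := by
    simp only [dotProduct, sq, Fintype.sum_prod_type, Finset.sum_mul_sum]
    exact Finset.sum_congr rfl fun i _ => Finset.sum_congr rfl fun j _ => by ring
  have hxx : 0 ≤ x ⬝ᵥ x := Finset.sum_nonneg fun i _ => mul_self_nonneg (x i)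
  rw [hexp, frobNorm, ← Real.sqrt_sq hxx, ← Real.sqrt_mul (by positivity), ← hsq,
    ← Fintype.sum_prod_type' (fun i j => E i j ^ 2)]
  exact Real.abs_le_sqrt (Finset.sum_mul_sq_le_sq_mul_sq _ _ _)

theorem posDef_of_frobNorm_sub_smul_one_lt [DecidableEq ι] {C : Matrix ι ι ℝ}
    (hC : C.IsHermitian) {μ : ℝ} (h : frobNorm (C - μ • 1) < μ) : C.PosDef := by
  refine .of_dotProduct_mulVec_pos hC fun x hx => ?_
  have hxx : 0 < x ⬝ᵥ x := by simpa using dotProduct_star_self_pos_iff.mpr hx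
  have hsplit : x ⬝ᵥ C *ᵥ x = x ⬝ᵥ (C - μ • 1) *ᵥ x + μ * (x ⬝ᵥ x) := by
    simp [sub_mulVec, smul_mulVec]
  have hE := neg_abs_le (x ⬝ᵥ (C - μ • 1) *ᵥ x)
  have hbound := abs_dotProduct_mulVec_le_frobNorm_mul (C - μ • 1) x
  rw [star_trivial, hsplit]
  nlinarith

theorem IsHermitian.jordan {X Y : Matrix ι ι ℝ} (hX : X.IsHermitian) (hY : Y.IsHermitian) :
    (jordan X Y).IsHermitian := by
  simp only [IsHermitian, _root_.jordan, conjTranspose_smul, conjTranspose_add, conjTranspose_mul,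
    hX.eq, hY.eq, star_trivial, add_comm]

end Matrix

theorem jordan_eq_mul_of_commute {X Y : Matrix ι ι ℝ} (h : Commute X Y) :
    jordan X Y = X * Y := by
  rw [jordan, h.eq, ← two_smul ℝ, smul_smul]
  norm_num

theorem jordan_sum_smul_right {κ : Type*} (X : Matrix ι ι ℝ) (s : Finset κ) (c : κ → ℝ)
    (Y : κ → Matrix ι ι ℝ) : jordan X (∑ k ∈ s, c k • Y k) = ∑ k ∈ s, c k • jordan X (Y k) := by
  simp only [jordan, Matrix.mul_sum, Matrix.sum_mul, Matrix.mul_smul, Matrix.smul_mul,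
    ← Finset.sum_add_distrib, ← smul_add, Finset.smul_sum, smul_comm (2:ℝ)⁻¹]

theorem trace_mul_jordan (X Y Z : Matrix ι ι ℝ) :
    (X * jordan Y Z).trace = (jordan Y X * Z).trace := by
  simp only [jordan, Matrix.mul_smul, Matrix.smul_mul, trace_smul, Matrix.mul_add, Matrix.add_mul,
    trace_add, ← Matrix.mul_assoc]
  rw [trace_mul_cycle X Z Y, trace_mul_cycle Y X Z, add_comm]

theorem trace_mul_jordan_jordan (A B M : Matrix ι ι ℝ) :
    (M * jordan B (jordan A M)).trace =
      (2:ℝ)⁻¹ * ((M * M * jordan A B).trace + (M * A * M * B).trace) := by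
  simp only [jordan, Matrix.mul_smul, Matrix.smul_mul, Matrix.mul_add, Matrix.add_mul, trace_smul,
    trace_add, smul_eq_mul, ← Matrix.mul_assoc]
  have h₁ : (M * B * A * M).trace = (M * M * B * A).trace := by
    rw [trace_mul_comm (M * B * A), ← Matrix.mul_assoc, ← Matrix.mul_assoc]
  have h₂ : (M * B * M * A).trace = (M * A * M * B).trace := by
    rw [trace_mul_comm (M * B * M), trace_mul_cycle']
    simp only [Matrix.mul_assoc]
  rw [h₁, h₂]
  ring

theorem trace_jordan_mul_add_jordan {A B M G : Matrix ι ι ℝ}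
    (hG : jordan A G = jordan B (jordan A M)) :
    (jordan A M * (G + jordan B M)).trace =
      (M * M * jordan A B).trace + (M * A * M * B).trace := by
  have hFG : (jordan A M * G).trace = (M * jordan B (jordan A M)).trace := by
    rw [← trace_mul_jordan, hG]
  have hFBM : (jordan A M * jordan B M).trace = (jordan A M * G).trace := by
    rw [trace_mul_jordan, ← hG, trace_mul_comm, trace_mul_jordan]
  rw [Matrix.mul_add, trace_add, hFBM, hFG, trace_mul_jordan_jordan]
  ring

theorem trace_jordan_mul_add_jordan_pos [DecidableEq ι] {A B M G : Matrix ι ι ℝ}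
    (hA : A.PosSemidef) (hB : B.PosSemidef) (hAB : (jordan A B).PosDef)
    (hM : M.IsHermitian) (hM0 : M ≠ 0) (hG : jordan A G = jordan B (jordan A M)) :
    0 < (jordan A M * (G + jordan B M)).trace := by
  have h₁ : 0 < (M * M * jordan A B).trace := by
    simpa only [hM.eq, trace_mul_cycle M (jordan A B) M] using
      hAB.trace_conjTranspose_mul_mul_pos_s7 hM0
  have h₂ : 0 ≤ (M * A * M * B).trace := by
    simpa only [hM.eq] using (hA.conjTranspose_mul_mul_same M).trace_mul_nonneg_s7 hB
  rw [trace_jordan_mul_add_jordan hG]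
  positivity

theorem H_matrix_posdef_general {m n : ℕ} (A B : Matrix (Fin m) (Fin m) ℝ)
    (hA : A.PosDef) (hB : B.PosDef)
    (Fmat : Fin n → Matrix (Fin m) (Fin m) ℝ)
    (hFind : LinearIndependent ℝ Fmat)
    (hyp : (∃ μ : ℝ, 0 < μ ∧ ∃ θ : ℝ, 0 ≤ θ ∧ θ < 1 ∧
        frobNorm (jordan A B - μ • (1 : Matrix (Fin m) (Fin m) ℝ)) ≤ θ * μ) ∨
      A * B = B * A)
    (Mmat Gmat : Fin n → Matrix (Fin m) (Fin m) ℝ)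
    (hMsym : ∀ j, (Mmat j).IsSymm)
    (hM : ∀ j, jordan A (Mmat j) = Fmat j)
    (hG : ∀ j, jordan A (Gmat j) = jordan B (Fmat j))
    (H : Matrix (Fin n) (Fin n) ℝ)
    (hH : ∀ i j, H i j = (1 / 2) * (Fmat i * (Gmat j + jordan B (Mmat j))).trace) :
    ∀ Δx : Fin n → ℝ, Δx ≠ 0 → 0 < ∑ i, ∑ j, Δx i * Δx j * H i j := by
  intro c hc
  set M := ∑ i, c i • Mmat i
  set G := ∑ i, c i • Gmat i
  have hAM : jordan A M = ∑ i, c i • Fmat i := by simp only [M, jordan_sum_smul_right, hM]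
  have hAG : jordan A G = jordan B (jordan A M) := by
    simp only [G, hAM, jordan_sum_smul_right, hG]
  have hMherm : M.IsHermitian :=
    isSelfAdjoint_sum _ fun i _ => (isHermitian_iff_isSymm.mpr (hMsym i)).smul (.all (c i))
  have hM0 : M ≠ 0 := fun h0 =>
    hc (funext (Fintype.linearIndependent_iff.mp hFind c (by simp [← hAM, h0, jordan])))
  have hAB : (jordan A B).PosDef := hyp.elim
    (fun ⟨μ, hμ, θ, _, hθ, hfrob⟩ => posDef_of_frobNorm_sub_smul_one_lt (hA.1.jordan hB.1)
      (hfrob.trans_lt (by nlinarith)))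
    (fun h => jordan_eq_mul_of_commute h ▸ hA.mul_of_commute hB h)
  have hQ : ∑ i, ∑ j, c i * c j * H i j = (1 / 2) * (jordan A M * (G + jordan B M)).trace := by
    have hsum : G + jordan B M = ∑ j, c j • (Gmat j + jordan B (Mmat j)) := by
      simp only [G, M, jordan_sum_smul_right, smul_add, Finset.sum_add_distrib]
    rw [hsum, hAM, trace_sum_smul_mul_sum_smul, Finset.mul_sum]
    simp only [hH, Finset.mul_sum]
    exact Finset.sum_congr rfl fun i _ => Finset.sum_congr rfl fun j _ => by ring
  rw [hQ]
  exact mul_pos one_half_pos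
    (trace_jordan_mul_add_jordan_pos hA.posSemidef hB.posSemidef hAB hMherm hM0 hAG)

/-- positive definiteness of the matrix H = ((1/2) Fᵢ • (L_A⁻¹L_B + L_B L_A⁻¹) F_j)
under either a centrality condition or commutativity of A and B. -/
theorem H_matrix_posdef {m n : ℕ} (A B : Matrix (Fin m) (Fin m) ℝ)
    (hA : A.PosDef) (hB : B.PosDef)
    (Fmat : Fin n → Matrix (Fin m) (Fin m) ℝ)
    (hFsym : ∀ j, (Fmat j).IsSymm)
    (hFind : LinearIndependent ℝ Fmat)
    (hyp : (∃ μ : ℝ, 0 < μ ∧ ∃ θ : ℝ, 0 ≤ θ ∧ θ < 1 ∧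
        frobNorm (jordan A B - μ • (1 : Matrix (Fin m) (Fin m) ℝ)) ≤ θ * μ) ∨
      A * B = B * A)
    (Mmat Gmat : Fin n → Matrix (Fin m) (Fin m) ℝ)
    (hMsym : ∀ j, (Mmat j).IsSymm) (hGsym : ∀ j, (Gmat j).IsSymm)
    (hM : ∀ j, jordan A (Mmat j) = Fmat j)
    (hG : ∀ j, jordan A (Gmat j) = jordan B (Fmat j))
    (H : Matrix (Fin n) (Fin n) ℝ)
    (hH : ∀ i j, H i j = (1 / 2) * (Fmat i * (Gmat j + jordan B (Mmat j))).trace) :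
    ∀ Δx : Fin n → ℝ, Δx ≠ 0 → 0 < ∑ i, ∑ j, Δx i * Δx j * H i j :=
  H_matrix_posdef_general A B hA hB Fmat hFind hyp Mmat Gmat hMsym hM hG H hH
end

section
/- Let X ∈ S^m_+, Y ∈ S^m, and μ ≥ 0. Then ‖XY − YX‖_F ≤ 2‖X∘Y − μI‖_F. -/
/-!
Put `A := XY - μI`. Since `X` and `Y` are symmetric, `Aᵀ = YX - μI`, so the commutator is `A - Aᵀ`
and `X∘Y - μI = (A + Aᵀ)/2`. The parallelogram-type identity
`‖A + Aᵀ‖_F² = ‖A - Aᵀ‖_F² + 4 tr(A²)` reduces the claim to `tr(A²) ≥ 0`. Writing `X = S²` with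
`S` symmetric, `A = S(SY) - μI` has the same `tr(A²)` as `B = SYS - μI`, and `B` is symmetric,
so `tr(A²) = tr(B²) = ‖B‖_F² ≥ 0`.
-/

open Matrix

section Trace

variable {ι R : Type*} [Fintype ι] [CommRing R]

theorem trace_add_transpose_mul_add_transpose (A : Matrix ι ι R) :
    trace ((A + Aᵀ)ᵀ * (A + Aᵀ)) = trace ((A - Aᵀ)ᵀ * (A - Aᵀ)) + 4 * trace (A * A) := by
  have hAA : trace (Aᵀ * Aᵀ) = trace (A * A) := trace_transpose_mul A A
  simp only [transpose_add, transpose_sub, transpose_transpose, add_mul, mul_add, sub_mul,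
    mul_sub, trace_add, trace_sub, hAA]
  ring

theorem trace_mul_sub_smul_one_sq_comm [DecidableEq ι] (P Q : Matrix ι ι R) (c : R) :
    trace ((P * Q - c • 1) * (P * Q - c • 1)) = trace ((Q * P - c • 1) * (Q * P - c • 1)) := by
  have hPQPQ : trace (P * Q * (P * Q)) = trace (Q * P * (Q * P)) := by
    rw [Matrix.mul_assoc, trace_mul_comm]
    simp only [Matrix.mul_assoc]
  simp only [sub_mul, mul_sub, Matrix.smul_mul, Matrix.mul_smul, Matrix.one_mul, Matrix.mul_one,
    trace_sub, trace_smul, hPQPQ, trace_mul_comm P Q]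

end Trace

theorem Matrix.IsSymm.trace_mul_self_nonneg {ι : Type*} [Fintype ι] {B : Matrix ι ι ℝ}
    (hB : B.IsSymm) : 0 ≤ trace (B * B) := by
  simpa [conjTranspose_eq_transpose_of_trivial, hB.eq] using
    (posSemidef_conjTranspose_mul_self B).trace_nonneg

theorem Matrix.PosSemidef.exists_isSymm_mul_self_eq {ι : Type*} [Fintype ι] [DecidableEq ι]
    {X : Matrix ι ι ℝ} (hX : X.PosSemidef) : ∃ S : Matrix ι ι ℝ, S.IsSymm ∧ S * S = X := by
  open scoped MatrixOrder in
  exact ⟨CFC.sqrt X, isHermitian_iff_isSymm.mp (CFC.sqrt_nonneg X).posSemidef.isHermitian,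
    CFC.sqrt_mul_sqrt_self X hX.nonneg⟩

theorem Matrix.PosSemidef.trace_mul_sub_smul_one_sq_nonneg {ι : Type*} [Fintype ι]
    [DecidableEq ι] {X Y : Matrix ι ι ℝ} (hX : X.PosSemidef) (hY : Y.IsSymm) (μ : ℝ) :
    0 ≤ trace ((X * Y - μ • 1) * (X * Y - μ • 1)) := by
  obtain ⟨S, hS, rfl⟩ := hX.exists_isSymm_mul_self_eq
  have hSYS : (S * Y * S - μ • 1).IsSymm := by
    simp only [IsSymm, transpose_sub, transpose_mul, transpose_smul, transpose_one, hS.eq, hY.eq,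
      Matrix.mul_assoc]
  rw [Matrix.mul_assoc, trace_mul_sub_smul_one_sq_comm]
  exact hSYS.trace_mul_self_nonneg

section FrobNorm

variable {ι : Type*} [Fintype ι]

theorem frobNorm_eq_sqrt_trace (A : Matrix ι ι ℝ) : frobNorm A = √(trace (Aᵀ * A)) := by
  simp only [frobNorm, trace, diag, mul_apply, transpose_apply, sq]
  rw [Finset.sum_comm]

theorem frobNorm_smul (c : ℝ) (A : Matrix ι ι ℝ) : frobNorm (c • A) = |c| * frobNorm A := by
  rw [frobNorm_eq_sqrt_trace, frobNorm_eq_sqrt_trace, transpose_smul, Matrix.smul_mul,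
    Matrix.mul_smul, smul_smul, trace_smul, smul_eq_mul, Real.sqrt_mul (mul_self_nonneg c),
    Real.sqrt_mul_self_eq_abs]

theorem frobNorm_sub_transpose_le_add_transpose {A : Matrix ι ι ℝ} (hA : 0 ≤ trace (A * A)) :
    frobNorm (A - Aᵀ) ≤ frobNorm (A + Aᵀ) := by
  rw [frobNorm_eq_sqrt_trace, frobNorm_eq_sqrt_trace, trace_add_transpose_mul_add_transpose]
  exact Real.sqrt_le_sqrt (by linarith)

end FrobNorm

theorem commutator_frob_bound_general {m : ℕ} (X Y : Matrix (Fin m) (Fin m) ℝ)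
    (hX : X.PosSemidef) (hY : Y.IsSymm) (μ : ℝ) :
    frobNorm (X * Y - Y * X) ≤ 2 * frobNorm (jordan X Y - μ • (1 : Matrix (Fin m) (Fin m) ℝ)) := by
  set A := X * Y - μ • (1 : Matrix (Fin m) (Fin m) ℝ)
  have hAT : Aᵀ = Y * X - μ • 1 := by
    simp only [A, transpose_sub, transpose_mul, transpose_smul, transpose_one,
      hY.eq, isHermitian_iff_isSymm.mp hX.isHermitian |>.eq]
  have hcomm : X * Y - Y * X = A - Aᵀ := by
    rw [hAT, sub_sub_sub_cancel_right]
  have hjordan : jordan X Y - μ • 1 = (2:ℝ)⁻¹ • (A + Aᵀ) := by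
    rw [hAT, jordan]; module
  rw [hcomm, hjordan, frobNorm_smul, abs_of_pos (by norm_num), ← mul_assoc,
    mul_inv_cancel₀ two_ne_zero, one_mul]
  exact frobNorm_sub_transpose_le_add_transpose (hX.trace_mul_sub_smul_one_sq_nonneg hY μ)

/-- ‖XY − YX‖_F ≤ 2‖X∘Y − μI‖_F for X psd, Y symmetric, μ ≥ 0. -/
theorem commutator_frob_bound {m : ℕ} (X Y : Matrix (Fin m) (Fin m) ℝ)
    (hX : X.PosSemidef) (hY : Y.IsSymm) (μ : ℝ) (hμ : 0 ≤ μ) :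
    frobNorm (X * Y - Y * X) ≤ 2 * frobNorm (jordan X Y - μ • (1 : Matrix (Fin m) (Fin m) ℝ)) :=
  commutator_frob_bound_general X Y hX hY μ
end

section
/- Let X ∈ S^m_{++} and ΔX ∈ S^m, and let X^{1/2} denote the positive definite square root of X. Set λ := λ_min(X^{-1/2}·ΔX·X^{-1/2}). If λ < 0, then sup{s ∈ ℝ : s ≥ 0 and X + s·ΔX ∈ S^m_+} = −1/λ (in particular this set is bounded above); if λ ≥ 0, then X + s·ΔX ∈ S^m_+ for every s ≥ 0. -/
open scoped ComplexOrder in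
/-- The positive semidefinite square root of a positive semidefinite matrix
(the definition of `Matrix.PosSemidef.sqrt` from the older Mathlib, since removed). -/
noncomputable def Matrix.PosSemidef.sqrt {n 𝕜 : Type*} [Fintype n] [DecidableEq n] [RCLike 𝕜]
    {A : Matrix n n 𝕜} (hA : A.PosSemidef) : Matrix n n 𝕜 :=
  hA.1.eigenvectorUnitary.1 * Matrix.diagonal ((↑) ∘ (√·) ∘ hA.1.eigenvalues) *
  (star hA.1.eigenvectorUnitary : Matrix n n 𝕜)

/-!
Write `X = S * S` with `S = X^{1/2}` self-adjoint and invertible, and `M = S⁻¹ * ΔX * S⁻¹`.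
Then `X + s • ΔX = S * (1 + s • M) * S`, so by congruence `X + s • ΔX ⪰ 0` iff `1 + s • M ⪰ 0`,
which by the functional calculus means `1 + s * μ ≥ 0` for every `μ` in the spectrum of `M`.
For `s ≥ 0` the binding constraint is the least eigenvalue `μ = λ`.
-/

open Matrix
open scoped MatrixOrder ComplexOrder

section StarOrderedAlgebra

variable {A : Type*} [Ring A] [StarRing A] [PartialOrder A] [StarOrderedRing A] [Algebra ℝ A]
  [TopologicalSpace A] [ContinuousFunctionalCalculus ℝ A IsSelfAdjoint] [NonnegSpectrumClass ℝ A]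
  {a : A}

theorem one_add_smul_nonneg_iff (ha : IsSelfAdjoint a) (s : ℝ) :
    0 ≤ 1 + s • a ↔ ∀ μ ∈ spectrum ℝ a, 0 ≤ 1 + s * μ := by
  have hcfc : 1 + s • a = cfc (fun x : ℝ => 1 + s * x) a := by
    rw [cfc_add .., cfc_const_one .., cfc_const_mul .., cfc_id' ..]
  rw [hcfc, cfc_nonneg_iff ..]

theorem one_add_smul_nonneg_iff_of_isLeast (ha : IsSelfAdjoint a) {lam s : ℝ}
    (hlam : IsLeast (spectrum ℝ a) lam) (hs : 0 ≤ s) :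
    0 ≤ 1 + s • a ↔ 0 ≤ 1 + s * lam := by
  rw [one_add_smul_nonneg_iff ha]
  refine ⟨fun h => h lam hlam.1, fun h μ hμ => ?_⟩
  nlinarith [mul_le_mul_of_nonneg_left (hlam.2 hμ) hs]

end StarOrderedAlgebra

theorem Matrix.mem_spectrum_iff_exists_mulVec_eq_smul {K n : Type*} [Field K] [Fintype n]
    [DecidableEq n] {A : Matrix n n K} {μ : K} :
    μ ∈ spectrum K A ↔ ∃ v ≠ 0, A *ᵥ v = μ • v := by
  rw [← spectrum_toLin', ← Module.End.hasEigenvalue_iff_mem_spectrum]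
  constructor
  · intro h
    obtain ⟨v, hv⟩ := h.exists_hasEigenvector
    exact ⟨v, hv.2, by simpa using hv.apply_eq_smul⟩
  · rintro ⟨v, hv, hAv⟩
    exact Module.End.hasEigenvalue_of_hasEigenvector
      ⟨by simpa [Module.End.mem_eigenspace_iff] using hAv, hv⟩

section RCLike

variable {n 𝕜 : Type*} [Fintype n] [DecidableEq n] [RCLike 𝕜]

theorem Matrix.PosSemidef.sqrt_eq_cfc {A : Matrix n n 𝕜} (hA : A.PosSemidef) :
    hA.sqrt = CFC.sqrt A := by
  rw [CFC.sqrt_eq_real_sqrt A hA.nonneg, cfcₙ_eq_cfc, hA.1.cfc_eq, IsHermitian.cfc,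
    Unitary.conjStarAlgAut_apply]
  rfl

theorem Matrix.mul_self_add_smul_nonneg_iff {S D : Matrix n n 𝕜} (hS : IsUnit S)
    (hSa : IsSelfAdjoint S) (s : ℝ) :
    0 ≤ S * S + s • D ↔ 0 ≤ 1 + s • (S⁻¹ * D * S⁻¹) := by
  have hconj : S * S + s • D = S * (1 + s • (S⁻¹ * D * S⁻¹)) * star S := by
    have h1 : S * S⁻¹ = 1 := mul_nonsing_inv S ((isUnit_iff_isUnit_det S).1 hS)
    have h2 : S⁻¹ * S = 1 := nonsing_inv_mul S ((isUnit_iff_isUnit_det S).1 hS)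
    rw [hSa.star_eq, mul_add, add_mul, mul_one, mul_smul_comm, smul_mul_assoc]
    simp only [← mul_assoc, h1, one_mul]
    rw [mul_assoc, h2, mul_one]
  rw [hconj, hS.star_right_conjugate_nonneg_iff]

end RCLike

theorem isLUB_setOf_one_add_mul_nonneg {lam : ℝ} (hlam : lam < 0) :
    IsLUB {s : ℝ | 0 ≤ s ∧ 0 ≤ 1 + s * lam} (-1 / lam) := by
  have hIcc : {s : ℝ | 0 ≤ s ∧ 0 ≤ 1 + s * lam} = Set.Icc 0 (-1 / lam) := by
    ext s
    simp only [Set.mem_ofPred_eq, Set.mem_Icc, le_div_iff_of_neg hlam]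
    constructor <;> rintro ⟨h0, h1⟩ <;> exact ⟨h0, by linarith⟩
  rw [hIcc]
  exact isLUB_Icc (div_nonneg_of_nonpos (by norm_num) hlam.le)

/-- the maximal feasible step length keeping `X + s·ΔX` positive semidefinite
is `−1/λ` when `λ := λ_min(X^{-1/2}·ΔX·X^{-1/2}) < 0`, and is infinite when `λ ≥ 0`. -/
theorem max_step_length {m : ℕ} (X ΔX : Matrix (Fin m) (Fin m) ℝ)
    (hX : X.PosDef) (hΔX : ΔX.IsSymm)
    (lam : ℝ)
    (hEig : ∃ v : Fin m → ℝ, v ≠ 0 ∧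
      ((hX.posSemidef.sqrt)⁻¹ * ΔX * (hX.posSemidef.sqrt)⁻¹).mulVec v = lam • v)
    (hMin : ∀ t : ℝ, (∃ w : Fin m → ℝ, w ≠ 0 ∧
      ((hX.posSemidef.sqrt)⁻¹ * ΔX * (hX.posSemidef.sqrt)⁻¹).mulVec w = t • w) → lam ≤ t) :
    (lam < 0 → IsLUB {s : ℝ | 0 ≤ s ∧ (X + s • ΔX).PosSemidef} (-1 / lam)) ∧
    (0 ≤ lam → ∀ s : ℝ, 0 ≤ s → (X + s • ΔX).PosSemidef) := by
  set S := hX.posSemidef.sqrt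
  have hS : S = CFC.sqrt X := hX.posSemidef.sqrt_eq_cfc
  have hSS : S * S = X := hS ▸ CFC.sqrt_mul_sqrt_self X hX.posSemidef.nonneg
  have hSa : IsSelfAdjoint S := hS ▸ (CFC.sqrt_nonneg X).isSelfAdjoint
  have hSu : IsUnit S := hS ▸ (CFC.isUnit_sqrt_iff X hX.posSemidef.nonneg).2 hX.isUnit
  have hM : IsSelfAdjoint (S⁻¹ * ΔX * S⁻¹) := by
    have hSi : IsSelfAdjoint S⁻¹ := IsHermitian.inv hSa
    simpa only [hSi.star_eq] using (isHermitian_iff_isSymm.2 hΔX).isSelfAdjoint.conjugate S⁻¹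
  have hlam : IsLeast (spectrum ℝ (S⁻¹ * ΔX * S⁻¹)) lam :=
    ⟨mem_spectrum_iff_exists_mulVec_eq_smul.2 hEig,
      fun t ht => hMin t (mem_spectrum_iff_exists_mulVec_eq_smul.1 ht)⟩
  have hpsd_iff : ∀ s, 0 ≤ s → ((X + s • ΔX).PosSemidef ↔ 0 ≤ 1 + s * lam) := fun s hs => by
    rw [← nonneg_iff_posSemidef, ← hSS, mul_self_add_smul_nonneg_iff hSu hSa,
      one_add_smul_nonneg_iff_of_isLeast hM hlam hs]
  refine ⟨fun hneg => ?_, fun hpos s hs => (hpsd_iff s hs).2 (by positivity)⟩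
  rw [show {s : ℝ | 0 ≤ s ∧ (X + s • ΔX).PosSemidef} = {s | 0 ≤ s ∧ 0 ≤ 1 + s * lam} from
    Set.ext fun s => and_congr_right (hpsd_iff s)]
  exact isLUB_setOf_one_add_mul_nonneg hneg
end

section
/- Let X, Y ∈ S^m_{++} and ΔX, ΔY ∈ S^m. If the Jordan product (X + s·ΔX)∘(Y + s·ΔY) is positive definite for every s ∈ [0,1], then X + ΔX ∈ S^m_{++} and Y + ΔY ∈ S^m_{++}. -/
open Matrix Set Filter Topology

section

variable {ι : Type*} [Fintype ι]

lemma jordan_comm (A B : Matrix ι ι ℝ) : jordan A B = jordan B A := by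
  rw [jordan, jordan, add_comm]

lemma Matrix.PosSemidef.posDef_of_posDef_jordan {A B : Matrix ι ι ℝ} (hA : A.PosSemidef)
    (hAB : (jordan A B).PosDef) : A.PosDef := by
  rw [posDef_iff_dotProduct_mulVec]
  refine ⟨hA.1, fun v hv => (hA.dotProduct_mulVec_nonneg v).lt_of_ne fun h0 => ?_⟩
  have hAv : A *ᵥ v = 0 := (hA.dotProduct_mulVec_zero_iff v).1 h0.symm
  have hform : star v ⬝ᵥ jordan A B *ᵥ v = 0 := by
    rw [jordan, smul_mulVec, add_mulVec, ← mulVec_mulVec, ← mulVec_mulVec, hAv, mulVec_zero,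
      add_zero, dotProduct_smul, dotProduct_mulVec, ← mulVec_transpose, star_trivial,
      ← conjTranspose_eq_transpose_of_trivial, hA.1.eq, hAv, zero_dotProduct, smul_zero]
  exact ((posDef_iff_dotProduct_mulVec.1 hAB).2 hv).ne' hform

lemma Matrix.isClosed_setOf_posSemidef_s16 : IsClosed {M : Matrix ι ι ℝ | M.PosSemidef} := by
  simp only [posSemidef_iff_dotProduct_mulVec, ofPred_and, ofPred_forall]
  refine (isClosed_eq continuous_id.matrix_conjTranspose continuous_id).inter
    (isClosed_iInter fun v => isClosed_le continuous_const ?_)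
  exact continuous_const.dotProduct (continuous_id.matrix_mulVec continuous_const)

lemma Matrix.PosDef.eventually_posDef_of_isHermitian {M : Matrix ι ι ℝ} (hM : M.PosDef) :
    ∀ᶠ N in 𝓝 M, N.IsHermitian → N.PosDef := by
  have hform : Continuous fun p : Matrix ι ι ℝ × (ι → ℝ) => p.2 ⬝ᵥ p.1 *ᵥ p.2 :=
    continuous_snd.dotProduct (continuous_fst.matrix_mulVec continuous_snd)
  have hsphere : ∀ᶠ N in 𝓝 M, ∀ v ∈ Metric.sphere (0 : ι → ℝ) 1, 0 < v ⬝ᵥ N *ᵥ v := by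
    refine (isCompact_sphere 0 1).eventually_forall_of_forall_eventually fun v hv => ?_
    have hv0 : v ≠ 0 := ne_zero_of_mem_unit_sphere ⟨v, hv⟩
    exact (hform.tendsto (M, v)).eventually_const_lt (by simpa using hM.dotProduct_mulVec_pos hv0)
  filter_upwards [hsphere] with N hN hherm
  refine posDef_iff_dotProduct_mulVec.2 ⟨hherm, fun v hv => ?_⟩
  have hr : 0 < ‖v‖ := norm_pos_iff.2 hv
  have hunit : ‖v‖⁻¹ • v ∈ Metric.sphere (0 : ι → ℝ) 1 := by
    simp [norm_smul, hr.ne']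
  have hscale : v ⬝ᵥ N *ᵥ v = ‖v‖ ^ 2 * ((‖v‖⁻¹ • v) ⬝ᵥ N *ᵥ (‖v‖⁻¹ • v)) := by
    rw [mulVec_smul, dotProduct_smul, smul_dotProduct, smul_eq_mul, smul_eq_mul]
    field_simp
  simpa [hscale] using mul_pos (pow_pos hr 2) (hN _ hunit)

lemma IsPreconnected.forall_posDef {α : Type*} [TopologicalSpace α] {S : Set α}
    (hS : IsPreconnected S) {A : α → Matrix ι ι ℝ} (hA : Continuous A)
    (hherm : ∀ x, (A x).IsHermitian) {a : α} (ha : a ∈ S) (hPD : (A a).PosDef)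
    (hpsd : ∀ x ∈ S, (A x).PosSemidef → (A x).PosDef) : ∀ x ∈ S, (A x).PosDef := by
  have hopen : IsOpen {x | (A x).PosDef} := isOpen_iff_mem_nhds.2 fun x hx =>
    ((hA.tendsto x).eventually hx.eventually_posDef_of_isHermitian).mono fun y hy => hy (hherm y)
  have hclosure : closure {x | (A x).PosDef} ⊆ {x | (A x).PosSemidef} :=
    closure_minimal (fun x hx => hx.posSemidef) (isClosed_setOf_posSemidef_s16.preimage hA)
  exact hS.subset_of_closure_inter_subset hopen ⟨a, ha, hPD⟩
    fun x ⟨hx, hxS⟩ => hpsd x hxS (hclosure hx)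

lemma Matrix.PosDef.add_of_forall_posDef_jordan {P Δ Q Γ : Matrix ι ι ℝ} (hP : P.PosDef)
    (hΔ : Δ.IsSymm) (h : ∀ s ∈ Icc (0 : ℝ) 1, (jordan (P + s • Δ) (Q + s • Γ)).PosDef) :
    (P + Δ).PosDef := by
  have hherm : ∀ s : ℝ, (P + s • Δ).IsHermitian := fun s =>
    hP.1.add ((isHermitian_iff_isSymm.2 hΔ).smul (IsSelfAdjoint.all s))
  simpa using isPreconnected_Icc.forall_posDef (by fun_prop) hherm
    (left_mem_Icc.2 zero_le_one) (by simpa using hP)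
    (fun s hs hpsd => hpsd.posDef_of_posDef_jordan (h s hs)) 1 (right_mem_Icc.2 zero_le_one)

end

/-- if the Jordan product along the segment stays positive definite,
then the endpoints `X + ΔX` and `Y + ΔY` are positive definite. -/
theorem endpoint_posdef_of_jordan_posdef {m : ℕ} (X Y ΔX ΔY : Matrix (Fin m) (Fin m) ℝ)
    (hX : X.PosDef) (hY : Y.PosDef) (hΔX : ΔX.IsSymm) (hΔY : ΔY.IsSymm)
    (h : ∀ s : ℝ, s ∈ Set.Icc (0:ℝ) 1 → (jordan (X + s • ΔX) (Y + s • ΔY)).PosDef) :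
    (X + ΔX).PosDef ∧ (Y + ΔY).PosDef :=
  ⟨hX.add_of_forall_posDef_jordan hΔX h,
    hY.add_of_forall_posDef_jordan hΔY fun s hs => jordan_comm (X + s • ΔX) _ ▸ h s hs⟩
end
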